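/- (Another expression of the first-order general formula.) For any general source X and any ε, δ ∈ [0,1) satisfying ε + δ < 1, it holds that G_{ε,δ}(X) = H̃_{ε,δ}(X) = H̄_{ε+δ}(X). -/
import Mathlib


open Filter MeasureTheory

namespace NY

/-- A probability distribution on a set, given by its point mass function. -/
structure Dist (α : Type*) where
  p : α → ℝ
  nonneg : ∀ x, 0 ≤ p x
  hasSum : HasSum p 1

/-- The probability of a set under a distribution. -/
noncomputable def Dist.pr {α : Type*} (P : Dist α) (A : Set α) : ℝ := ∑' x : A, P.p x.1

/-- 𝒰* : nonempty finite strings over the code alphabet 𝒰 = {1,…,K}. -/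
abbrev Word (K : ℕ) := {u : List (Fin K) // u ≠ []}

/-- Length of a string, as a real number. -/
noncomputable def wlen {K : ℕ} (u : Word K) : ℝ := u.1.length

/-- Error probability of a variable-length code (φ, ψ). -/
noncomputable def errP {α : Type*} {K : ℕ} (P : Dist α) (φ : α → Word K) (ψ : Word K → α) : ℝ :=
  P.pr {x | ψ (φ x) ≠ x}

/-- Overflow probability of an encoder φ with threshold η. -/
noncomputable def ovP {α : Type*} {K : ℕ} (P : Dist α) (φ : α → Word K) (η : ℝ) : ℝ :=
  P.pr {x | wlen (φ x) > η}

/-- A general source: for each blocklength n, a distribution on 𝒳^n. -/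
abbrev Source (𝒳 : Type*) := (n : ℕ) → Dist (Fin n → 𝒳)

/-- The limit as ν ↓ 0 of a function g which is nonincreasing in ν
(the limit exists by monotonicity and equals the supremum over ν > 0). -/
noncomputable def limNu (g : ℝ → ℝ) : ℝ := sSup (g '' Set.Ioi (0 : ℝ))

variable {𝒳 : Type*}

/-- A rate R ≥ 0 is (ε,δ)-achievable. -/
def FirstAch (K : ℕ) (X : Source 𝒳) (ε δ R : ℝ) : Prop :=
  0 ≤ R ∧ ∃ (φ : ∀ n, (Fin n → 𝒳) → Word K) (ψ : ∀ n, Word K → (Fin n → 𝒳)),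
    limsup (fun n => errP (X n) (φ n) (ψ n)) atTop ≤ ε ∧
    limsup (fun n => ovP (X n) (φ n) ((n : ℝ) * R)) atTop ≤ δ

/-- The first-order (ε,δ)-optimum threshold R(ε,δ|X). -/
noncomputable def Ropt (K : ℕ) (X : Source 𝒳) (ε δ : ℝ) : ℝ :=
  sInf {R | FirstAch K X ε δ R}

/-- L is (ε,δ,R)-achievable (second order). -/
def SecondAch (K : ℕ) (X : Source 𝒳) (ε δ R L : ℝ) : Prop :=
  ∃ (φ : ∀ n, (Fin n → 𝒳) → Word K) (ψ : ∀ n, Word K → (Fin n → 𝒳)),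
    limsup (fun n => errP (X n) (φ n) (ψ n)) atTop ≤ ε ∧
    limsup (fun n => ovP (X n) (φ n) ((n : ℝ) * R + Real.sqrt (n : ℝ) * L)) atTop ≤ δ

/-- The second-order (ε,δ,R)-optimum threshold L(ε,δ,R|X). -/
noncomputable def Lopt (K : ℕ) (X : Source 𝒳) (ε δ R : ℝ) : ℝ :=
  sInf {L | SecondAch K X ε δ R L}

/-- A rate R ≥ 0 is optimistically (ε,δ)-achievable. -/
def OptFirstAch (K : ℕ) (X : Source 𝒳) (ε δ R : ℝ) : Prop :=
  0 ≤ R ∧ ∃ (φ : ∀ n, (Fin n → 𝒳) → Word K) (ψ : ∀ n, Word K → (Fin n → 𝒳)),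
    ∀ γ > (0 : ℝ), ∃ ns : ℕ → ℕ, StrictMono ns ∧ ∀ i,
      errP (X (ns i)) (φ (ns i)) (ψ (ns i)) ≤ ε + γ ∧
      ovP (X (ns i)) (φ (ns i)) ((ns i : ℝ) * R) ≤ δ + γ

/-- The optimistic first-order (ε,δ)-optimum threshold R*(ε,δ|X). -/
noncomputable def RoptStar (K : ℕ) (X : Source 𝒳) (ε δ : ℝ) : ℝ :=
  sInf {R | OptFirstAch K X ε δ R}

/-- L is optimistically (ε,δ,R)-achievable. -/
def OptSecondAch (K : ℕ) (X : Source 𝒳) (ε δ R L : ℝ) : Prop :=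
  ∃ (φ : ∀ n, (Fin n → 𝒳) → Word K) (ψ : ∀ n, Word K → (Fin n → 𝒳)),
    ∀ γ > (0 : ℝ), ∃ ns : ℕ → ℕ, StrictMono ns ∧ ∀ i,
      errP (X (ns i)) (φ (ns i)) (ψ (ns i)) ≤ ε + γ ∧
      ovP (X (ns i)) (φ (ns i)) ((ns i : ℝ) * R + Real.sqrt (ns i : ℝ) * L) ≤ δ + γ

/-- The optimistic second-order (ε,δ,R)-optimum threshold L*(ε,δ,R|X). -/
noncomputable def LoptStar (K : ℕ) (X : Source 𝒳) (ε δ R : ℝ) : ℝ :=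
  sInf {L | OptSecondAch K X ε δ R L}

/-- A rate R ≥ 0 is type I (ε,δ)-achievable. -/
def TypeIAch (K : ℕ) (X : Source 𝒳) (ε δ R : ℝ) : Prop :=
  0 ≤ R ∧ ∃ (φ : ∀ n, (Fin n → 𝒳) → Word K) (ψ : ∀ n, Word K → (Fin n → 𝒳)),
    limsup (fun n => errP (X n) (φ n) (ψ n)) atTop ≤ ε ∧
    liminf (fun n => ovP (X n) (φ n) ((n : ℝ) * R)) atTop ≤ δ

/-- R†(ε,δ|X). -/
noncomputable def Rdagger (K : ℕ) (X : Source 𝒳) (ε δ : ℝ) : ℝ :=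
  sInf {R | TypeIAch K X ε δ R}

/-- A rate R ≥ 0 is type II (ε,δ)-achievable. -/
def TypeIIAch (K : ℕ) (X : Source 𝒳) (ε δ R : ℝ) : Prop :=
  0 ≤ R ∧ ∃ (φ : ∀ n, (Fin n → 𝒳) → Word K) (ψ : ∀ n, Word K → (Fin n → 𝒳)),
    liminf (fun n => errP (X n) (φ n) (ψ n)) atTop ≤ ε ∧
    limsup (fun n => ovP (X n) (φ n) ((n : ℝ) * R)) atTop ≤ δ

/-- R‡(ε,δ|X). -/
noncomputable def Rddagger (K : ℕ) (X : Source 𝒳) (ε δ : ℝ) : ℝ :=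
  sInf {R | TypeIIAch K X ε δ R}

/-- H̄_γ(X) := inf{ R : limsup_n Pr{ (1/n) log(1/P_{X^n}(X^n)) > R } ≤ γ }. -/
noncomputable def Hbar (K : ℕ) (X : Source 𝒳) (γ : ℝ) : ℝ :=
  sInf {R | limsup (fun n =>
    (X n).pr {x | Real.logb (K : ℝ) (1 / (X n).p x) / (n : ℝ) > R}) atTop ≤ γ}

/-- H̄*_γ(X) (optimistic version, with liminf). -/
noncomputable def HbarStar (K : ℕ) (X : Source 𝒳) (γ : ℝ) : ℝ :=
  sInf {R | liminf (fun n =>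
    (X n).pr {x | Real.logb (K : ℝ) (1 / (X n).p x) / (n : ℝ) > R}) atTop ≤ γ}

/-- H̄_γ(R|X) := inf{ L : limsup_n Pr{ (1/n) log(1/P_{X^n}(X^n)) > R + L/√n } ≤ γ }. -/
noncomputable def Hbar2 (K : ℕ) (X : Source 𝒳) (γ R : ℝ) : ℝ :=
  sInf {L | limsup (fun n =>
    (X n).pr {x | Real.logb (K : ℝ) (1 / (X n).p x) / (n : ℝ)
      > R + L / Real.sqrt (n : ℝ)}) atTop ≤ γ}

/-- H̄*_γ(R|X) (optimistic version, with liminf). -/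
noncomputable def Hbar2Star (K : ℕ) (X : Source 𝒳) (γ R : ℝ) : ℝ :=
  sInf {L | liminf (fun n =>
    (X n).pr {x | Real.logb (K : ℝ) (1 / (X n).p x) / (n : ℝ)
      > R + L / Real.sqrt (n : ℝ)}) atTop ≤ γ}

/-- F(ε,R) := limsup_n inf_{A : Pr(A) ≥ 1−ε} Pr{ −(1/n) log P_{X^n}(X^n) ≥ R, X^n ∈ A }. -/
noncomputable def Fspec (K : ℕ) (X : Source 𝒳) (ε R : ℝ) : ℝ :=
  limsup (fun n =>
    sInf ((fun A : Set (Fin n → 𝒳) =>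
        (X n).pr (A ∩ {x | -Real.logb (K : ℝ) ((X n).p x) / (n : ℝ) ≥ R})) ''
      {A | (X n).pr A ≥ 1 - ε})) atTop

/-- H̃_{ε,δ}(X) := inf{ R : F(ε,R) ≤ δ }. -/
noncomputable def Htilde (K : ℕ) (X : Source 𝒳) (ε δ : ℝ) : ℝ :=
  sInf {R | Fspec K X ε R ≤ δ}

/-- G_{ε,δ}(X). -/
noncomputable def Gfirst (K : ℕ) (X : Source 𝒳) (ε δ : ℝ) : ℝ :=
  sInf {R | limNu (fun ν => limsup (fun n =>
    sInf ((fun A : Set (Fin n → 𝒳) =>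
        (X n).pr (A ∩ {x | -Real.logb (K : ℝ) ((X n).p x / (X n).pr A) / (n : ℝ) ≥ R})) ''
      {A | (X n).pr A ≥ 1 - ε - ν})) atTop) ≤ δ}

/-- G*_{ε,δ}(X) (optimistic version, with liminf). -/
noncomputable def GfirstStar (K : ℕ) (X : Source 𝒳) (ε δ : ℝ) : ℝ :=
  sInf {R | limNu (fun ν => liminf (fun n =>
    sInf ((fun A : Set (Fin n → 𝒳) =>
        (X n).pr (A ∩ {x | -Real.logb (K : ℝ) ((X n).p x / (X n).pr A) / (n : ℝ) ≥ R})) ''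
      {A | (X n).pr A ≥ 1 - ε - ν})) atTop) ≤ δ}

/-- G_{ε,δ}(R|X). -/
noncomputable def Gsecond (K : ℕ) (X : Source 𝒳) (ε δ R : ℝ) : ℝ :=
  sInf {L | limNu (fun ν => limsup (fun n =>
    sInf ((fun A : Set (Fin n → 𝒳) =>
        (X n).pr (A ∩ {x | -Real.logb (K : ℝ) ((X n).p x / (X n).pr A) / (n : ℝ)
          ≥ R + L / Real.sqrt (n : ℝ)})) ''
      {A | (X n).pr A ≥ 1 - ε - ν})) atTop) ≤ δ}

/-- G*_{ε,δ}(R|X) (optimistic version, with liminf). -/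
noncomputable def GsecondStar (K : ℕ) (X : Source 𝒳) (ε δ R : ℝ) : ℝ :=
  sInf {L | limNu (fun ν => liminf (fun n =>
    sInf ((fun A : Set (Fin n → 𝒳) =>
        (X n).pr (A ∩ {x | -Real.logb (K : ℝ) ((X n).p x / (X n).pr A) / (n : ℝ)
          ≥ R + L / Real.sqrt (n : ℝ)})) ''
      {A | (X n).pr A ≥ 1 - ε - ν})) atTop) ≤ δ}

/-- A rate R is optimistically ε-achievable by fixed-length codes. -/
def FixAchR (K : ℕ) (X : Source 𝒳) (ε R : ℝ) : Prop :=
  ∃ (M : ℕ → ℕ) (φ : ∀ n, (Fin n → 𝒳) → Fin (M n)) (ψ : ∀ n, Fin (M n) → (Fin n → 𝒳)),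
    ∀ γ > (0 : ℝ), ∃ ns : ℕ → ℕ, StrictMono ns ∧ ∀ i,
      (X (ns i)).pr {x | ψ (ns i) (φ (ns i) x) ≠ x} ≤ ε + γ ∧
      Real.logb (K : ℝ) (M (ns i) : ℝ) / (ns i : ℝ) ≤ R + γ

/-- R^f(ε|X). -/
noncomputable def Rfix (K : ℕ) (X : Source 𝒳) (ε : ℝ) : ℝ :=
  sInf {R | FixAchR K X ε R}

/-- A real L is optimistically (ε,R)-achievable by fixed-length codes. -/
def FixAchL (K : ℕ) (X : Source 𝒳) (ε R L : ℝ) : Prop :=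
  ∃ (M : ℕ → ℕ) (φ : ∀ n, (Fin n → 𝒳) → Fin (M n)) (ψ : ∀ n, Fin (M n) → (Fin n → 𝒳)),
    ∀ γ > (0 : ℝ), ∃ ns : ℕ → ℕ, StrictMono ns ∧ ∀ i,
      (X (ns i)).pr {x | ψ (ns i) (φ (ns i) x) ≠ x} ≤ ε + γ ∧
      Real.logb (K : ℝ) ((M (ns i) : ℝ) / (K : ℝ) ^ ((ns i : ℝ) * R)) / Real.sqrt (ns i : ℝ)
        ≤ L + γ

/-- L^f(ε,R|X). -/
noncomputable def Lfix (K : ℕ) (X : Source 𝒳) (ε R : ℝ) : ℝ :=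
  sInf {L | FixAchL K X ε R L}

/-! ### Auxiliary lemmas about `Dist.pr` -/

section PrLemmas

variable {α : Type*} (P : Dist α)

lemma Dist.summable' : Summable P.p := P.hasSum.summable

lemma Dist.pr_eq (A : Set α) : P.pr A = ∑' x, A.indicator P.p x := tsum_subtype A P.p

lemma Dist.summable_ind (A : Set α) : Summable (A.indicator P.p) :=
  P.summable'.indicator A

lemma Dist.ind_nonneg (A : Set α) (x : α) : 0 ≤ A.indicator P.p x :=
  Set.indicator_nonneg (fun y _ => P.nonneg y) x

lemma Dist.pr_nonneg (A : Set α) : 0 ≤ P.pr A := by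
  rw [P.pr_eq]; exact tsum_nonneg (P.ind_nonneg A)

lemma Dist.pr_mono_null {S T : Set α} (h : ∀ x ∈ S, P.p x ≠ 0 → x ∈ T) :
    P.pr S ≤ P.pr T := by
  rw [P.pr_eq, P.pr_eq]
  refine Summable.tsum_le_tsum (fun x => ?_) (P.summable_ind S) (P.summable_ind T)
  by_cases hx : x ∈ S
  · rw [Set.indicator_of_mem hx]
    by_cases hp : P.p x = 0
    · rw [hp]; exact P.ind_nonneg T x
    · rw [Set.indicator_of_mem (h x hx hp)]
  · rw [Set.indicator_of_notMem hx]; exact P.ind_nonneg T x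

lemma Dist.pr_mono {S T : Set α} (h : S ⊆ T) : P.pr S ≤ P.pr T :=
  P.pr_mono_null (fun x hx _ => h hx)

lemma Dist.pr_le_one (A : Set α) : P.pr A ≤ 1 := by
  rw [P.pr_eq]
  calc ∑' x, A.indicator P.p x ≤ ∑' x, P.p x :=
        Summable.tsum_le_tsum (Set.indicator_le_self' (fun x _ => P.nonneg x))
          (P.summable_ind A) P.summable'
    _ = 1 := P.hasSum.tsum_eq

lemma Dist.pr_univ : P.pr (Set.univ : Set α) = 1 := by
  rw [P.pr_eq]
  simp only [Set.indicator_univ]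
  exact P.hasSum.tsum_eq

lemma Dist.pr_empty : P.pr (∅ : Set α) = 0 := by
  rw [P.pr_eq]; simp

lemma Dist.pr_union {S T : Set α} (h : Disjoint S T) :
    P.pr (S ∪ T) = P.pr S + P.pr T := by
  rw [P.pr_eq, P.pr_eq, P.pr_eq, ← Summable.tsum_add (P.summable_ind S) (P.summable_ind T)]
  exact tsum_congr (fun x => by rw [Set.indicator_union_of_disjoint h])

lemma Dist.pr_compl (A : Set α) : P.pr Aᶜ = 1 - P.pr A := by
  have h := P.pr_union (disjoint_compl_right (a := A))
  rw [Set.union_compl_self, P.pr_univ] at h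
  linarith

lemma Dist.pr_diff {C B : Set α} (h : C ⊆ B) : P.pr (B \ C) = P.pr B - P.pr C := by
  have hu : C ∪ (B \ C) = B := Set.union_diff_cancel h
  have hd : Disjoint C (B \ C) := Set.disjoint_sdiff_right
  have := P.pr_union hd
  rw [hu] at this
  linarith

lemma Dist.pr_union_le (S T : Set α) : P.pr (S ∪ T) ≤ P.pr S + P.pr T := by
  rw [P.pr_eq, P.pr_eq, P.pr_eq, ← Summable.tsum_add (P.summable_ind S) (P.summable_ind T)]
  refine Summable.tsum_le_tsum (fun x => ?_) (P.summable_ind _)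
    ((P.summable_ind S).add (P.summable_ind T))
  by_cases hs : x ∈ S
  · rw [Set.indicator_of_mem (Set.mem_union_left _ hs), Set.indicator_of_mem hs]
    have := P.ind_nonneg T x; linarith
  · by_cases ht : x ∈ T
    · rw [Set.indicator_of_mem (Set.mem_union_right _ ht), Set.indicator_of_mem ht,
        Set.indicator_of_notMem hs]
      linarith
    · rw [Set.indicator_of_notMem (by simp [hs, ht]), Set.indicator_of_notMem hs,
        Set.indicator_of_notMem ht]
      linarith

lemma Dist.p_le_one (x : α) : P.p x ≤ 1 :=
  le_hasSum P.hasSum x (fun j _ => P.nonneg j)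

/-- The splitting lemma: if every atom of `B` has mass at most `η`, then one can find a
subset `C ⊆ B` of mass at most `t` and at least `min t (pr B) - η`. -/
lemma Dist.split [Countable α] (B : Set α) (t η : ℝ)
    (ht : 0 ≤ t) (hη : 0 ≤ η) (hatom : ∀ x ∈ B, P.p x ≤ η) :
    ∃ C : Set α, C ⊆ B ∧ P.pr C ≤ t ∧ min t (P.pr B) - η ≤ P.pr C := by
  classical
  obtain ⟨f, hf⟩ := exists_injective_nat α
  set Q : ℕ → ℝ := fun m => P.pr {x | x ∈ B ∧ f x < m} with hQdef
  set C : Set α := {x | x ∈ B ∧ Q (f x) + P.p x ≤ t} with hCdef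
  have hCB : C ⊆ B := fun x hx => hx.1
  refine ⟨C, hCB, ?_, ?_⟩
  · -- upper bound
    rw [P.pr_eq]
    refine Summable.tsum_le_of_sum_le (P.summable_ind C) (fun F => ?_)
    by_cases hFC : (F.filter (fun x => x ∈ C)).Nonempty
    · obtain ⟨x0, hx0mem, hx0max⟩ := Finset.exists_max_image _ f hFC
      rw [Finset.mem_filter] at hx0mem
      obtain ⟨hx0F, hx0C⟩ := hx0mem
      have key : ∑ x ∈ F, C.indicator P.p x
          ≤ P.p x0 + ∑ x ∈ F.erase x0, {x | x ∈ B ∧ f x < f x0}.indicator P.p x := by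
        rw [← Finset.add_sum_erase F _ hx0F, Set.indicator_of_mem hx0C]
        refine add_le_add le_rfl (Finset.sum_le_sum (fun x hx => ?_))
        have hxne : x ≠ x0 := Finset.ne_of_mem_erase hx
        have hxF : x ∈ F := Finset.mem_of_mem_erase hx
        by_cases hxC : x ∈ C
        · have hle : f x ≤ f x0 := hx0max x (Finset.mem_filter.mpr ⟨hxF, hxC⟩)
          have hne : f x ≠ f x0 := fun h => hxne (hf h)
          have : x ∈ {x | x ∈ B ∧ f x < f x0} := ⟨hCB hxC, lt_of_le_of_ne hle hne⟩
          rw [Set.indicator_of_mem hxC, Set.indicator_of_mem this]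
        · rw [Set.indicator_of_notMem hxC]
          exact P.ind_nonneg _ x
      have key2 : ∑ x ∈ F.erase x0, {x | x ∈ B ∧ f x < f x0}.indicator P.p x
          ≤ Q (f x0) := by
        rw [hQdef]
        simp only [P.pr_eq]
        exact Summable.sum_le_tsum _ (fun i _ => P.ind_nonneg _ i) (P.summable_ind _)
      have hx0C' := hx0C
      rw [hCdef] at hx0C'
      have := hx0C'.2
      linarith
    · have : ∀ x ∈ F, C.indicator P.p x = 0 := by
        intro x hxF
        have hxC : x ∉ C := by
          intro h
          exact hFC ⟨x, Finset.mem_filter.mpr ⟨hxF, h⟩⟩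
        rw [Set.indicator_of_notMem hxC]
      rw [Finset.sum_eq_zero this]
      exact ht
  · -- lower bound
    by_cases hall : ∀ x ∈ B, P.p x ≠ 0 → x ∈ C
    · have h1 : P.pr B ≤ P.pr C := P.pr_mono_null hall
      have h2 : min t (P.pr B) ≤ P.pr B := min_le_right _ _
      linarith
    · push_neg at hall
      set S : Set ℕ := {m | ∃ y, f y = m ∧ y ∈ B ∧ P.p y ≠ 0 ∧ y ∉ C} with hSdef
      have hS : S.Nonempty := by
        obtain ⟨y, hyB, hyp, hyC⟩ := hall
        exact ⟨f y, y, rfl, hyB, hyp, hyC⟩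
      obtain ⟨y, hfy, hyB, hyp, hyC⟩ := Nat.sInf_mem hS
      have hmin : ∀ x, x ∈ B → P.p x ≠ 0 → f x < f y → x ∈ C := by
        intro x hxB hxp hlt
        by_contra hxc
        have hxS : f x ∈ S := ⟨x, rfl, hxB, hxp, hxc⟩
        have := Nat.sInf_le hxS
        omega
      have hQC : Q (f y) ≤ P.pr C :=
        P.pr_mono_null (fun x hx hxp => hmin x hx.1 hxp hx.2)
      have hyC' : ¬ (y ∈ B ∧ Q (f y) + P.p y ≤ t) := hyC
      have hgt : t < Q (f y) + P.p y := by
        by_contra h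
        exact hyC' ⟨hyB, not_lt.mp h⟩
      have hpy : P.p y ≤ η := hatom y hyB
      have : t - η ≤ P.pr C := by linarith
      have h3 : min t (P.pr B) ≤ t := min_le_left _ _
      linarith

end PrLemmas

/-! ### Information-spectrum quantities -/

section Spectrum

variable {𝒳' : Type*}

/-- The overflow probability appearing in `Hbar`. -/
private noncomputable def vH (K : ℕ) (X : Source 𝒳') (R : ℝ) (n : ℕ) : ℝ :=
  (X n).pr {x | Real.logb (K : ℝ) (1 / (X n).p x) / (n : ℝ) > R}

/-- The inner quantity of `Fspec`. -/
private noncomputable def vT (K : ℕ) (X : Source 𝒳') (ε R : ℝ) (n : ℕ) : ℝ :=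
  sInf ((fun A : Set (Fin n → 𝒳') =>
      (X n).pr (A ∩ {x | -Real.logb (K : ℝ) ((X n).p x) / (n : ℝ) ≥ R})) ''
    {A | (X n).pr A ≥ 1 - ε})

/-- The inner quantity of `Gfirst`. -/
private noncomputable def vG (K : ℕ) (X : Source 𝒳') (ε ν R : ℝ) (n : ℕ) : ℝ :=
  sInf ((fun A : Set (Fin n → 𝒳') =>
      (X n).pr (A ∩ {x | -Real.logb (K : ℝ) ((X n).p x / (X n).pr A) / (n : ℝ) ≥ R})) ''
    {A | (X n).pr A ≥ 1 - ε - ν})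

private lemma Hbar_eq (K : ℕ) (X : Source 𝒳') (γ : ℝ) :
    Hbar K X γ = sInf {R | limsup (vH K X R) atTop ≤ γ} := rfl

private lemma Htilde_eq (K : ℕ) (X : Source 𝒳') (ε δ : ℝ) :
    Htilde K X ε δ = sInf {R | limsup (vT K X ε R) atTop ≤ δ} := rfl

private lemma Gfirst_eq (K : ℕ) (X : Source 𝒳') (ε δ : ℝ) :
    Gfirst K X ε δ = sInf {R | limNu (fun ν => limsup (vG K X ε ν R) atTop) ≤ δ} := rfl

private lemma im_bddBelow {α : Type*} {G : Set α → ℝ} (h : ∀ A, 0 ≤ G A) (cls : Set (Set α)) :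
    BddBelow (G '' cls) := ⟨0, by rintro b ⟨A, -, rfl⟩; exact h A⟩

private lemma bddU {u : ℕ → ℝ} (h : ∀ n, u n ≤ 1) :
    IsBoundedUnder (· ≤ ·) (atTop : Filter ℕ) u := isBoundedUnder_of ⟨1, h⟩

private lemma cobddU {u : ℕ → ℝ} (h : ∀ n, 0 ≤ u n) :
    IsCoboundedUnder (· ≤ ·) (atTop : Filter ℕ) u :=
  IsBoundedUnder.isCoboundedUnder_flip
    (isBoundedUnder_of ⟨0, fun n => h n⟩ : IsBoundedUnder (· ≥ ·) _ u)

private lemma vH_nonneg (K : ℕ) (X : Source 𝒳') (R : ℝ) (n : ℕ) : 0 ≤ vH K X R n :=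
  (X n).pr_nonneg _

private lemma vH_le_one (K : ℕ) (X : Source 𝒳') (R : ℝ) (n : ℕ) : vH K X R n ≤ 1 :=
  (X n).pr_le_one _

private lemma univ_mem_cls {α : Type*} (P : Dist α) {c : ℝ} (hc : c ≤ 1) :
    (Set.univ : Set α) ∈ {A : Set α | P.pr A ≥ c} := by
  simp only [Set.mem_setOf_eq, P.pr_univ]; exact hc

private lemma vT_nonneg (K : ℕ) (X : Source 𝒳') {ε : ℝ} (hε0 : 0 ≤ ε) (R : ℝ) (n : ℕ) :
    0 ≤ vT K X ε R n := by
  refine le_csInf ⟨_, Set.mem_image_of_mem _ (univ_mem_cls (X n) (by linarith))⟩ ?_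
  rintro b ⟨A, -, rfl⟩; exact (X n).pr_nonneg _

private lemma vT_le_one (K : ℕ) (X : Source 𝒳') {ε : ℝ} (hε0 : 0 ≤ ε) (R : ℝ) (n : ℕ) :
    vT K X ε R n ≤ 1 := by
  refine le_trans (csInf_le (im_bddBelow (fun A => (X n).pr_nonneg _) _)
    (Set.mem_image_of_mem _ (univ_mem_cls (X n) (by linarith)))) ((X n).pr_le_one _)

private lemma vG_nonneg (K : ℕ) (X : Source 𝒳') {ε ν : ℝ} (hεν : 0 ≤ ε + ν) (R : ℝ) (n : ℕ) :
    0 ≤ vG K X ε ν R n := by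
  refine le_csInf ⟨_, Set.mem_image_of_mem _ (univ_mem_cls (X n) (by linarith))⟩ ?_
  rintro b ⟨A, -, rfl⟩; exact (X n).pr_nonneg _

private lemma vG_le_one (K : ℕ) (X : Source 𝒳') {ε ν : ℝ} (hεν : 0 ≤ ε + ν) (R : ℝ) (n : ℕ) :
    vG K X ε ν R n ≤ 1 := by
  refine le_trans (csInf_le (im_bddBelow (fun A => (X n).pr_nonneg _) _)
    (Set.mem_image_of_mem _ (univ_mem_cls (X n) (by linarith)))) ((X n).pr_le_one _)

/-- A negative rate is never in the `Hbar` set. -/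
private lemma P0 {K : ℕ} (hK : 2 ≤ K) (X : Source 𝒳') {γ : ℝ} (hγ : γ < 1) {R : ℝ}
    (hR : limsup (vH K X R) atTop ≤ γ) : 0 ≤ R := by
  have h1K : (1 : ℝ) < K := by exact_mod_cast Nat.lt_of_lt_of_le one_lt_two hK
  by_contra h
  push_neg at h
  have hall : ∀ n, vH K X R n = 1 := by
    intro n
    have hset : {x : Fin n → 𝒳' | Real.logb (K : ℝ) (1 / (X n).p x) / (n : ℝ) > R}
        = Set.univ := by
      ext x
      simp only [Set.mem_setOf_eq, Set.mem_univ, iff_true]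
      have h1 : 0 ≤ Real.logb (K : ℝ) (1 / (X n).p x) := by
        rcases eq_or_lt_of_le ((X n).nonneg x) with hp | hp
        · rw [← hp]; simp [Real.logb_zero]
        · exact Real.logb_nonneg h1K ((one_le_div hp).mpr ((X n).p_le_one x))
      have h2 : 0 ≤ Real.logb (K : ℝ) (1 / (X n).p x) / (n : ℝ) :=
        div_nonneg h1 (Nat.cast_nonneg n)
      linarith
    rw [vH, hset, (X n).pr_univ]
  have : limsup (vH K X R) atTop = 1 := by
    have : vH K X R = fun _ => (1 : ℝ) := funext hall
    rw [this, limsup_const]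
  linarith [this ▸ hR]

/-- (A): membership in the `Htilde` set implies membership in the `Hbar` set. -/
private lemma P1 {K : ℕ} (hK : 2 ≤ K) (X : Source 𝒳') {ε δ : ℝ}
    (hε0 : 0 ≤ ε) {R : ℝ} (hR : limsup (vT K X ε R) atTop ≤ δ) :
    limsup (vH K X R) atTop ≤ ε + δ := by
  refine le_of_forall_pos_le_add (fun e he => ?_)
  have hev : ∀ᶠ n in atTop, vT K X ε R n < δ + e :=
    eventually_lt_of_limsup_lt (lt_of_le_of_lt hR (by linarith))
      (bddU (vT_le_one K X hε0 R))
  have key : ∀ n, vH K X R n ≤ vT K X ε R n + ε := by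
    intro n
    set B' : Set (Fin n → 𝒳') := {x | -Real.logb (K : ℝ) ((X n).p x) / (n : ℝ) ≥ R} with hB'
    have h1 : vH K X R n ≤ (X n).pr B' := by
      apply (X n).pr_mono
      intro x hx
      simp only [Set.mem_setOf_eq] at hx ⊢
      rw [one_div, Real.logb_inv] at hx
      exact le_of_lt hx
    have h2 : (X n).pr B' - ε ≤ vT K X ε R n := by
      refine le_csInf ⟨_, Set.mem_image_of_mem _ (univ_mem_cls (X n) (by linarith))⟩ ?_
      rintro b ⟨A, hA, rfl⟩
      simp only [Set.mem_setOf_eq] at hA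
      have hsub : B' ⊆ (A ∩ B') ∪ Aᶜ := by
        intro x hx
        by_cases hxA : x ∈ A
        · exact Or.inl ⟨hxA, hx⟩
        · exact Or.inr hxA
      have hm := (X n).pr_mono hsub
      have h3 := (X n).pr_union_le (A ∩ B') Aᶜ
      have h4 : (X n).pr Aᶜ ≤ ε := by rw [(X n).pr_compl]; linarith
      linarith
    linarith
  have hev2 : ∀ᶠ n in atTop, vH K X R n ≤ ε + δ + e :=
    hev.mono (fun n hn => by have := key n; linarith)
  exact limsup_le_of_le (cobddU (vH_nonneg K X R)) hev2

/-- (B): achievability, via the splitting lemma. -/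
private lemma P2 {𝒳' : Type*} [Countable 𝒳'] {K : ℕ} (hK : 2 ≤ K) (X : Source 𝒳') {ε δ : ℝ}
    (hε0 : 0 ≤ ε) (hδ0 : 0 ≤ δ) (hεδ : ε + δ < 1) {R τ : ℝ} (hτ : 0 < τ)
    (hR : limsup (vH K X R) atTop ≤ ε + δ) :
    limsup (vT K X ε (R + τ)) atTop ≤ δ := by
  have h1K : (1 : ℝ) < K := by exact_mod_cast Nat.lt_of_lt_of_le one_lt_two hK
  have hR0 : 0 ≤ R := P0 hK X hεδ hR
  set R' := R + τ with hR'def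
  have hR'pos : 0 < R' := by rw [hR'def]; linarith
  set r : ℝ := (K : ℝ) ^ (-R') with hrdef
  have hK0 : (0 : ℝ) ≤ K := by positivity
  have hr0 : 0 ≤ r := Real.rpow_nonneg hK0 _
  have hr1 : r < 1 := Real.rpow_lt_one_of_one_lt_of_neg h1K (by linarith)
  have hsplit : ∀ n : ℕ, ∃ C : Set (Fin n → 𝒳'),
      C ⊆ {x | -Real.logb (K : ℝ) ((X n).p x) / (n : ℝ) ≥ R'} ∧ (X n).pr C ≤ ε ∧
      min ε ((X n).pr {x | -Real.logb (K : ℝ) ((X n).p x) / (n : ℝ) ≥ R'}) - r ^ n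
        ≤ (X n).pr C := by
    intro n
    apply (X n).split _ ε (r ^ n) hε0 (pow_nonneg hr0 n)
    intro x hx
    simp only [Set.mem_setOf_eq] at hx
    rcases Nat.eq_zero_or_pos n with hn | hn
    · subst hn
      simp only [Nat.cast_zero, div_zero, ge_iff_le] at hx
      linarith
    · have hn' : (0 : ℝ) < n := by exact_mod_cast hn
      have hnR : (n : ℝ) * R' ≤ -Real.logb (K : ℝ) ((X n).p x) := by
        rw [ge_iff_le, le_div_iff₀ hn'] at hx
        linarith
    -- p x > 0
      have hp0 : 0 < (X n).p x := by
        rcases eq_or_lt_of_le ((X n).nonneg x) with hp | hp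
        · exfalso
          rw [← hp] at hnR
          simp only [Real.logb_zero, neg_zero] at hnR
          nlinarith
        · exact hp
      have hlog : Real.logb (K : ℝ) ((X n).p x) ≤ -((n : ℝ) * R') := by linarith
      have hle := (Real.logb_le_iff_le_rpow h1K hp0).mp hlog
      calc (X n).p x ≤ (K : ℝ) ^ (-((n : ℝ) * R')) := hle
        _ = r ^ n := by
            rw [hrdef, ← Real.rpow_natCast ((K : ℝ) ^ (-R')) n, ← Real.rpow_mul hK0]
            congr 1
            ring
  choose C hC1 hC2 hC3 using hsplit
  refine le_of_forall_pos_le_add (fun e he => ?_)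
  have he2 : (0 : ℝ) < e / 2 := by linarith
  have hev1 : ∀ᶠ n in atTop, vH K X R n < ε + δ + e / 2 :=
    eventually_lt_of_limsup_lt (by linarith) (bddU (vH_le_one K X R))
  have hev2 : ∀ᶠ n in atTop, r ^ n < e / 2 :=
    (tendsto_pow_atTop_nhds_zero_of_lt_one hr0 hr1).eventually (gt_mem_nhds he2)
  have hev : ∀ᶠ n in atTop, vT K X ε R' n ≤ δ + e := by
    filter_upwards [hev1, hev2] with n h1 h2
    set B'' : Set (Fin n → 𝒳') :=
      {x | -Real.logb (K : ℝ) ((X n).p x) / (n : ℝ) ≥ R'} with hB''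
    have hBsub : (X n).pr B'' ≤ vH K X R n := by
      apply (X n).pr_mono
      intro x hx
      replace hx : -Real.logb (K : ℝ) ((X n).p x) / (n : ℝ) ≥ R' := hx
      show Real.logb (K : ℝ) (1 / (X n).p x) / (n : ℝ) > R
      rw [one_div, Real.logb_inv]
      rcases Nat.eq_zero_or_pos n with hn | hn
      · exfalso
        subst hn
        simp only [Nat.cast_zero, div_zero, ge_iff_le] at hx
        linarith
      · have hRR' : R < R' := by rw [hR'def]; linarith
        exact lt_of_lt_of_le hRR' hx
    have hmemA : (C n)ᶜ ∈ {A : Set (Fin n → 𝒳') | (X n).pr A ≥ 1 - ε} := by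
      simp only [Set.mem_setOf_eq, (X n).pr_compl]
      linarith [hC2 n]
    have hval : (X n).pr ((C n)ᶜ ∩ B'') = (X n).pr B'' - (X n).pr (C n) := by
      rw [Set.inter_comm, ← Set.diff_eq]
      exact (X n).pr_diff (hC1 n)
    have hle : vT K X ε R' n ≤ (X n).pr ((C n)ᶜ ∩ B'') :=
      csInf_le (im_bddBelow (fun A => (X n).pr_nonneg _) _)
        (Set.mem_image_of_mem _ hmemA)
    have hminb : (X n).pr B'' - min ε ((X n).pr B'') ≤ δ + e / 2 := by
      rcases le_total ε ((X n).pr B'') with h | h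
      · rw [min_eq_left h]; linarith
      · rw [min_eq_right h]; linarith
    have h3 := hC3 n
    rw [hval] at hle
    linarith
  exact limsup_le_of_le (cobddU (vT_nonneg K X hε0 R')) hev

/-- (C): membership in the `Htilde` set implies membership in the `Gfirst` set. -/
private lemma P3 {K : ℕ} (hK : 2 ≤ K) (X : Source 𝒳') {ε δ : ℝ}
    (hε0 : 0 ≤ ε) (hε1 : ε < 1) (hδ0 : 0 ≤ δ) {R : ℝ}
    (hR : limsup (vT K X ε R) atTop ≤ δ) :
    limNu (fun ν => limsup (vG K X ε ν R) atTop) ≤ δ := by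
  have h1K : (1 : ℝ) < K := by exact_mod_cast Nat.lt_of_lt_of_le one_lt_two hK
  unfold limNu
  refine csSup_le ⟨_, Set.mem_image_of_mem _ (Set.mem_Ioi.mpr one_pos)⟩ ?_
  rintro b ⟨ν, hν, rfl⟩
  rw [Set.mem_Ioi] at hν
  by_cases hcase : 1 - ε - ν ≤ 0
  · have hz : ∀ n, vG K X ε ν R n ≤ 0 := by
      intro n
      have hmem : (∅ : Set (Fin n → 𝒳')) ∈ {A : Set (Fin n → 𝒳') | (X n).pr A ≥ 1 - ε - ν} := by
        simp only [Set.mem_setOf_eq, (X n).pr_empty]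
        linarith
      have hle : vG K X ε ν R n ≤ (X n).pr ((∅ : Set (Fin n → 𝒳'))
          ∩ {x | -Real.logb (K : ℝ) ((X n).p x / (X n).pr ∅) / (n : ℝ) ≥ R}) :=
        csInf_le (im_bddBelow (fun A => (X n).pr_nonneg _) _)
          (Set.mem_image_of_mem _ hmem)
      rw [Set.empty_inter, (X n).pr_empty] at hle
      exact hle
    exact limsup_le_of_le (cobddU (vG_nonneg K X (by linarith) R))
      (Eventually.of_forall fun n => le_trans (hz n) hδ0)
  · push_neg at hcase
    have key : ∀ n, vG K X ε ν R n ≤ vT K X ε R n := by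
      intro n
      refine le_csInf ⟨_, Set.mem_image_of_mem _ (univ_mem_cls (X n) (by linarith))⟩ ?_
      rintro b ⟨A, hA, rfl⟩
      simp only [Set.mem_setOf_eq] at hA
      have hAG : A ∈ {A' : Set (Fin n → 𝒳') | (X n).pr A' ≥ 1 - ε - ν} := by
        simp only [Set.mem_setOf_eq]
        linarith
      refine le_trans (csInf_le (im_bddBelow (fun A => (X n).pr_nonneg _) _)
        (Set.mem_image_of_mem _ hAG)) ?_
      apply (X n).pr_mono_null
      rintro x ⟨hxA, hx⟩ hp
      refine ⟨hxA, ?_⟩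
      simp only [Set.mem_setOf_eq] at hx ⊢
      have hp0 : 0 < (X n).p x := lt_of_le_of_ne ((X n).nonneg x) (Ne.symm hp)
      have hprA0 : 0 < (X n).pr A := by linarith
      have hprA1 : (X n).pr A ≤ 1 := (X n).pr_le_one A
      have hlog : Real.logb (K : ℝ) ((X n).p x)
          ≤ Real.logb (K : ℝ) ((X n).p x / (X n).pr A) := by
        rw [Real.logb_div (ne_of_gt hp0) (ne_of_gt hprA0)]
        have hnp : Real.logb (K : ℝ) ((X n).pr A) ≤ 0 :=
          Real.logb_nonpos h1K (le_of_lt hprA0) hprA1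
        linarith
      rcases Nat.eq_zero_or_pos n with hn | hn
      · subst hn
        simp only [Nat.cast_zero, div_zero, ge_iff_le] at hx ⊢
        exact hx
      · have hn' : (0 : ℝ) < n := by exact_mod_cast hn
        calc R ≤ -Real.logb (K : ℝ) ((X n).p x / (X n).pr A) / (n : ℝ) := hx
          _ ≤ -Real.logb (K : ℝ) ((X n).p x) / (n : ℝ) := by
              apply div_le_div_of_nonneg_right (by linarith) (le_of_lt hn')
    exact le_trans (limsup_le_limsup (Eventually.of_forall key)
      (cobddU (vG_nonneg K X (by linarith) R)) (bddU (vT_le_one K X hε0 R))) hR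

/-- (D): membership in the `Gfirst` set implies, after a shift, membership in the `Hbar` set. -/
private lemma P4 {K : ℕ} (hK : 2 ≤ K) (X : Source 𝒳') {ε δ : ℝ}
    (hε0 : 0 ≤ ε) (hε1 : ε < 1) (hδ0 : 0 ≤ δ) {R τ : ℝ} (hτ : 0 < τ)
    (hR : limNu (fun ν => limsup (vG K X ε ν R) atTop) ≤ δ) :
    limsup (vH K X (R + τ)) atTop ≤ ε + δ := by
  have h1K : (1 : ℝ) < K := by exact_mod_cast Nat.lt_of_lt_of_le one_lt_two hK
  refine le_of_forall_pos_le_add (fun e he => ?_)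
  set ν := min (e / 2) ((1 - ε) / 2) with hνdef
  have hν0 : 0 < ν := lt_min (by linarith) (by linarith)
  have hνe : ν ≤ e / 2 := min_le_left _ _
  have hν1 : 0 < 1 - ε - ν := by
    have := min_le_right (e / 2) ((1 - ε) / 2)
    rw [← hνdef] at this
    linarith
  unfold limNu at hR
  have hgν : limsup (vG K X ε ν R) atTop ≤ δ := by
    refine le_trans (le_csSup ?_ (Set.mem_image_of_mem
      (fun ν' => limsup (vG K X ε ν' R) atTop) (Set.mem_Ioi.mpr hν0))) hR
    refine ⟨1, ?_⟩
    rintro b ⟨ν', hν', rfl⟩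
    rw [Set.mem_Ioi] at hν'
    refine limsup_le_of_le (cobddU (vG_nonneg K X (by linarith) R))
      (Eventually.of_forall fun n => vG_le_one K X (by linarith) R n)
  set c := -Real.logb (K : ℝ) (1 - ε - ν) with hcdef
  have hc0 : 0 ≤ c := by
    rw [hcdef]
    have := Real.logb_nonpos h1K (le_of_lt hν1) (by linarith : 1 - ε - ν ≤ 1)
    linarith
  have hev1 : ∀ᶠ n in atTop, vG K X ε ν R n < δ + e / 2 :=
    eventually_lt_of_limsup_lt (by linarith)
      (bddU (fun n => vG_le_one K X (by linarith) R n))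
  have hev2 : ∀ᶠ (n : ℕ) in atTop, c ≤ (n : ℝ) * τ :=
    (tendsto_natCast_atTop_atTop.atTop_mul_const hτ).eventually_ge_atTop c
  have hev3 : ∀ᶠ (n : ℕ) in atTop, 1 ≤ n := eventually_ge_atTop 1
  have hev : ∀ᶠ n in atTop, vH K X (R + τ) n ≤ ε + δ + e := by
    filter_upwards [hev1, hev2, hev3] with n h1 h2 h3
    have hn' : (0 : ℝ) < n := by exact_mod_cast h3
    set B' : Set (Fin n → 𝒳') :=
      {x | -Real.logb (K : ℝ) ((X n).p x) / (n : ℝ) ≥ R + τ} with hB'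
    have hH : vH K X (R + τ) n ≤ (X n).pr B' := by
      apply (X n).pr_mono
      intro x hx
      simp only [Set.mem_setOf_eq] at hx ⊢
      rw [one_div, Real.logb_inv] at hx
      exact le_of_lt hx
    have hlb : (X n).pr B' - (ε + ν) ≤ vG K X ε ν R n := by
      refine le_csInf ⟨_, Set.mem_image_of_mem _ (univ_mem_cls (X n) (by linarith))⟩ ?_
      rintro b ⟨A, hA, rfl⟩
      simp only [Set.mem_setOf_eq] at hA
      have hprA0 : 0 < (X n).pr A := lt_of_lt_of_le hν1 hA
      show (X n).pr B' - (ε + ν) ≤ (X n).pr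
        (A ∩ {x | -Real.logb (K : ℝ) ((X n).p x / (X n).pr A) / (n : ℝ) ≥ R})
      set badG : Set (Fin n → 𝒳') :=
        {x | -Real.logb (K : ℝ) ((X n).p x / (X n).pr A) / (n : ℝ) ≥ R} with hbadG
      have hmn : (X n).pr (A ∩ B') ≤ (X n).pr (A ∩ badG) := by
        apply (X n).pr_mono_null
        rintro x ⟨hxA, hxB⟩ hp
        refine ⟨hxA, ?_⟩
        replace hxB : -Real.logb (K : ℝ) ((X n).p x) / (n : ℝ) ≥ R + τ := hxB
        show -Real.logb (K : ℝ) ((X n).p x / (X n).pr A) / (n : ℝ) ≥ R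
        have hp0 : 0 < (X n).p x := lt_of_le_of_ne ((X n).nonneg x) (Ne.symm hp)
        have hlogA : Real.logb (K : ℝ) (1 - ε - ν) ≤ Real.logb (K : ℝ) ((X n).pr A) :=
          (Real.logb_le_logb h1K hν1 hprA0).mpr hA
        have hsplit : -Real.logb (K : ℝ) ((X n).p x / (X n).pr A)
            = -Real.logb (K : ℝ) ((X n).p x) + Real.logb (K : ℝ) ((X n).pr A) := by
          rw [Real.logb_div (ne_of_gt hp0) (ne_of_gt hprA0)]
          ring
        have h5 : -Real.logb (K : ℝ) ((X n).p x) - c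
            ≤ -Real.logb (K : ℝ) ((X n).p x / (X n).pr A) := by
          rw [hsplit, hcdef]
          linarith
        have hcn : c / (n : ℝ) ≤ τ := by
          rw [div_le_iff₀ hn']
          linarith [h2]
        have hd1 : (-Real.logb (K : ℝ) ((X n).p x) - c) / (n : ℝ)
            ≤ -Real.logb (K : ℝ) ((X n).p x / (X n).pr A) / (n : ℝ) :=
          div_le_div_of_nonneg_right h5 (le_of_lt hn')
        have hd2 : R ≤ (-Real.logb (K : ℝ) ((X n).p x) - c) / (n : ℝ) := by
          rw [sub_div]
          have : R + τ ≤ -Real.logb (K : ℝ) ((X n).p x) / (n : ℝ) := hxB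
          linarith
        linarith
      have hsub : B' ⊆ (A ∩ B') ∪ Aᶜ := by
        intro x hx
        by_cases hxA : x ∈ A
        · exact Or.inl ⟨hxA, hx⟩
        · exact Or.inr hxA
      have hm := (X n).pr_mono hsub
      have h4 := (X n).pr_union_le (A ∩ B') Aᶜ
      have h6 : (X n).pr Aᶜ ≤ ε + ν := by
        rw [(X n).pr_compl]
        linarith
      linarith
    linarith [hH, hlb, h1, hνe]
  exact limsup_le_of_le (cobddU (vH_nonneg K X (R + τ))) hev

/-- Combining: two upper-closed-up-to-shift sets have the same infimum. -/
private lemma sInf_eq_of {Sa Sb : Set ℝ} (h1 : Sa ⊆ Sb)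
    (h2 : ∀ τ : ℝ, 0 < τ → ∀ R ∈ Sb, R + τ ∈ Sa)
    (ha0 : ∀ R ∈ Sa, 0 ≤ R) (hb0 : ∀ R ∈ Sb, 0 ≤ R) : sInf Sa = sInf Sb := by
  rcases Sa.eq_empty_or_nonempty with h | h
  · have hb : Sb = ∅ := by
      rw [Set.eq_empty_iff_forall_notMem]
      intro R hR
      exact (Set.eq_empty_iff_forall_notMem.mp h _) (h2 1 one_pos R hR)
    rw [h, hb]
  · have hbne : Sb.Nonempty := h.mono h1
    have hbb : BddBelow Sa := ⟨0, ha0⟩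
    apply le_antisymm
    · refine le_of_forall_pos_le_add (fun τ hτ => ?_)
      have h3 : ∀ R ∈ Sb, sInf Sa ≤ R + τ := fun R hR => csInf_le hbb (h2 τ hτ R hR)
      have h4 : sInf Sa - τ ≤ sInf Sb :=
        le_csInf hbne (fun R hR => by linarith [h3 R hR])
      linarith
    · exact csInf_le_csInf ⟨0, hb0⟩ h h1

end Spectrum

/-- G_{ε,δ}(X) = H̃_{ε,δ}(X) = H̄_{ε+δ}(X). -/
theorem statement6 {𝒳 : Type*} [Countable 𝒳] (K : ℕ) (hK : 2 ≤ K) (X : Source 𝒳)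
    (ε δ : ℝ) (hε0 : 0 ≤ ε) (hε1 : ε < 1) (hδ0 : 0 ≤ δ) (hδ1 : δ < 1) (hεδ : ε + δ < 1) :
    Gfirst K X ε δ = Htilde K X ε δ ∧ Htilde K X ε δ = Hbar K X (ε + δ) := by
  rw [Gfirst_eq, Htilde_eq, Hbar_eq]
  set SH := {R : ℝ | limsup (vH K X R) atTop ≤ ε + δ} with hSH
  set ST := {R : ℝ | limsup (vT K X ε R) atTop ≤ δ} with hST
  set SG := {R : ℝ | limNu (fun ν => limsup (vG K X ε ν R) atTop) ≤ δ} with hSG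
  have hTH : ST ⊆ SH := fun R hR => P1 hK X hε0 hR
  have hTG : ST ⊆ SG := fun R hR => P3 hK X hε0 hε1 hδ0 hR
  have hHT : ∀ τ : ℝ, 0 < τ → ∀ R ∈ SH, R + τ ∈ ST :=
    fun τ hτ R hR => P2 hK X hε0 hδ0 hεδ hτ hR
  have hGH : ∀ τ : ℝ, 0 < τ → ∀ R ∈ SG, R + τ ∈ SH :=
    fun τ hτ R hR => P4 hK X hε0 hε1 hδ0 hτ hR
  have hH0 : ∀ R ∈ SH, 0 ≤ R := fun R hR => P0 hK X hεδ hR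
  have hT0 : ∀ R ∈ ST, 0 ≤ R := fun R hR => hH0 R (hTH hR)
  have hG0 : ∀ R ∈ SG, 0 ≤ R := by
    intro R hR
    refine le_of_forall_pos_le_add (fun τ hτ => ?_)
    simpa using hH0 (R + τ) (hGH τ hτ R hR)
  have hGT : ∀ τ : ℝ, 0 < τ → ∀ R ∈ SG, R + τ ∈ ST := by
    intro τ hτ R hR
    have h1 : R + τ / 2 ∈ SH := hGH (τ / 2) (by linarith) R hR
    have h2 : R + τ / 2 + τ / 2 ∈ ST := hHT (τ / 2) (by linarith) _ h1
    have : R + τ / 2 + τ / 2 = R + τ := by ring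
    rwa [this] at h2
  constructor
  · exact (sInf_eq_of hTG hGT hT0 hG0).symm
  · exact sInf_eq_of hTH hHT hT0 hH0
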